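/- arXiv:2510.20789 — 2 statements merged into one kernel-verified Lean document; each statement's English description precedes it below -/
import Mathlib

section
/- Let n ≥ 2 and let M ∈ ℂ^{n×n} be Hermitian. If ‖M − I‖_F ≤ 1, then M is positive semidefinite and 2-incoherent. -/
open Matrix BigOperators Finset ComplexOrder

noncomputable section

/-- The number of nonzero entries of a vector in `ℂ^n`. -/
def suppCard {n : ℕ} (v : Fin n → ℂ) : ℕ :=
  (Finset.univ.filter fun i => v i ≠ 0).card

/-- A matrix `X` is `k`-incoherent if it can be written as `∑ vᵢ vᵢ*` where each `vᵢ`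
has at most `k` nonzero entries. -/
def KIncoherent {n : ℕ} (k : ℕ) (X : Matrix (Fin n) (Fin n) ℂ) : Prop :=
  ∃ (m : ℕ) (v : Fin m → (Fin n → ℂ)),
    (∀ i, suppCard (v i) ≤ k) ∧ X = ∑ i, vecMulVec (v i) (star (v i))

/-- The set `I_k` of positive semidefinite, `k`-incoherent matrices with trace at most `1`. -/
def Ik (n k : ℕ) : Set (Matrix (Fin n) (Fin n) ℂ) :=
  {X | X.PosSemidef ∧ KIncoherent k X ∧ X.trace.re ≤ 1}

/-- The Gram matrix of a list of vectors in `ℂ^d`. -/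
def gramMatrix {n d : ℕ} (ψ : Fin n → (Fin d → ℂ)) : Matrix (Fin n) (Fin n) ℂ :=
  Matrix.of fun i j => star (ψ i) ⬝ᵥ ψ j

/-- A list of states `ψ₁, …, ψₙ` is `k`-learnable if there is a POVM indexed by the
`k`-element subsets of `{1, …, n}` such that `⟨ψᵢ, M_S ψᵢ⟩ = 0` whenever `i ∉ S`. -/
def KLearnable {n d : ℕ} (k : ℕ) (ψ : Fin n → (Fin d → ℂ)) : Prop :=
  ∃ M : {S : Finset (Fin n) // S.card = k} → Matrix (Fin d) (Fin d) ℂ,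
    (∀ S, (M S).PosSemidef) ∧ (∑ S, M S) = 1 ∧
    ∀ (S : {S : Finset (Fin n) // S.card = k}) (i : Fin n),
      i ∉ S.val → star (ψ i) ⬝ᵥ ((M S) *ᵥ ψ i) = 0

/-- The Frobenius norm of a square complex matrix. -/
def frobNorm {m : ℕ} (A : Matrix (Fin m) (Fin m) ℂ) : ℝ :=
  Real.sqrt (∑ i, ∑ j, ‖A i j‖ ^ 2)

/-! Write `M = I + E` and weight the rows of `E` by their Euclidean norms `ρᵢ`: with
`dᵢⱼ = |Eᵢⱼ| ρⱼ / ρᵢ` one has `dᵢⱼ dⱼᵢ = |Eᵢⱼ|²`, so every `2 × 2` block `[[dᵢⱼ, Eᵢⱼ], [Ēᵢⱼ, dⱼᵢ]]`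
is a rank-one matrix `v v*` with `v` supported on `{i, j}`. Cauchy–Schwarz and `∑ ρᵢ² ≤ 1` give
`∑_{j ≠ i} dᵢⱼ ≤ 1 - |Eᵢᵢ| ≤ Mᵢᵢ`, so `M` is the sum of these blocks and a nonnegative diagonal. -/

namespace KIncoherent

variable {n k : ℕ}

lemma zero : KIncoherent k (0 : Matrix (Fin n) (Fin n) ℂ) :=
  ⟨0, Fin.elim0, fun i ↦ i.elim0, by simp⟩

lemma add {A B : Matrix (Fin n) (Fin n) ℂ} (hA : KIncoherent k A) (hB : KIncoherent k B) :
    KIncoherent k (A + B) := by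
  obtain ⟨m₁, v₁, hv₁, rfl⟩ := hA
  obtain ⟨m₂, v₂, hv₂, rfl⟩ := hB
  refine ⟨m₁ + m₂, Fin.append v₁ v₂, Fin.addCases (by simpa using hv₁) (by simpa using hv₂), ?_⟩
  simp [Fin.sum_univ_add]

lemma sum {ι : Type*} {s : Finset ι} {A : ι → Matrix (Fin n) (Fin n) ℂ}
    (hA : ∀ i ∈ s, KIncoherent k (A i)) : KIncoherent k (∑ i ∈ s, A i) :=
  Finset.sum_induction _ _ (fun _ _ ↦ add) zero hA

lemma posSemidef {X : Matrix (Fin n) (Fin n) ℂ} (hX : KIncoherent k X) : X.PosSemidef := by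
  obtain ⟨m, v, -, rfl⟩ := hX
  exact posSemidef_sum _ fun i _ ↦ posSemidef_vecMulVec_self_star (v i)

end KIncoherent

section TwoSparse

variable {n : ℕ}

lemma kIncoherent_vecMulVec {k : ℕ} {v : Fin n → ℂ} (hv : suppCard v ≤ k) :
    KIncoherent k (vecMulVec v (star v)) :=
  ⟨1, fun _ ↦ v, fun _ ↦ hv, by simp⟩

lemma suppCard_le_card {v : Fin n → ℂ} {s : Finset (Fin n)} (hv : ∀ l, v l ≠ 0 → l ∈ s) :
    suppCard v ≤ s.card :=
  Finset.card_le_card fun l hl ↦ hv l (Finset.mem_filter.1 hl).2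

lemma suppCard_single_add_single_le (i j : Fin n) (x y : ℂ) :
    suppCard (Pi.single i x + Pi.single j y) ≤ 2 := by
  refine (suppCard_le_card (s := {i, j}) fun l hl ↦ ?_).trans Finset.card_le_two
  by_contra h
  simp_all [Pi.single_apply]

lemma vecMulVec_single_add_single (i j : Fin n) (x y : ℂ) :
    vecMulVec (Pi.single i x + Pi.single j y) (star (Pi.single i x + Pi.single j y)) =
      single i i (x * star x) + single i j (x * star y) + single j i (y * star x) +
        single j j (y * star y) := by
  have hsingle (i j : Fin n) (x y : ℂ) :
      vecMulVec (Pi.single i x) (Pi.single j y) = single i j (x * y) := by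
    ext a b
    rcases eq_or_ne a i with rfl | ha <;> rcases eq_or_ne b j with rfl | hb <;>
      simp [vecMulVec_apply, *, Ne.symm]
  simp only [star_add, ← Pi.single_star, add_vecMulVec, vecMulVec_add, hsingle]
  abel

lemma kIncoherent_two_single_add_single (i j : Fin n) (x y : ℂ) :
    KIncoherent 2 (single i i (x * star x) + single i j (x * star y) + single j i (y * star x) +
      single j j (y * star y)) :=
  vecMulVec_single_add_single i j x y ▸ kIncoherent_vecMulVec (suppCard_single_add_single_le ..)

/-- The matrix `[[a, z], [z̄, b]]` placed on the rows and columns `i, j`. -/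
def pairBlock (i j : Fin n) (a : ℝ) (z : ℂ) (b : ℝ) : Matrix (Fin n) (Fin n) ℂ :=
  single i i (a : ℂ) + single i j z + single j i (star z) + single j j (b : ℂ)

lemma kIncoherent_two_pairBlock (i j : Fin n) {a b : ℝ} {z : ℂ} (ha : 0 ≤ a) (hb : 0 ≤ b)
    (hz : ‖z‖ ^ 2 ≤ a * b) : KIncoherent 2 (pairBlock i j a z b) := by
  have hsqrt {c : ℝ} (hc : 0 ≤ c) : ((√c : ℝ) : ℂ) * ((√c : ℝ) : ℂ) = c := by
    rw [← Complex.ofReal_mul, Real.mul_self_sqrt hc]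
  rcases ha.eq_or_lt with rfl | ha
  · obtain rfl : z = 0 := by simpa using hz
    simpa [pairBlock, hsqrt hb] using kIncoherent_two_single_add_single i j 0 √b
  -- `pairBlock i j a z b = v v* + w² eⱼ eⱼ*` with `v = x eᵢ + y eⱼ`.
  set x : ℂ := ((√a : ℝ) : ℂ)
  set y : ℂ := star z / x
  set w : ℂ := ((√(b - ‖z‖ ^ 2 / a) : ℝ) : ℂ)
  have hx : x ≠ 0 := Complex.ofReal_ne_zero.2 (Real.sqrt_pos.2 ha).ne'
  have hxs : star x = x := Complex.conj_ofReal _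
  have hws : star w = w := Complex.conj_ofReal _
  have hys : star y = z / x := by rw [star_div₀, star_star, hxs]
  have hxx : x * x = a := hsqrt ha.le
  have hww : w * w = b - ‖z‖ ^ 2 / a := by
    rw [hsqrt (sub_nonneg.2 ((div_le_iff₀ ha).2 (by linarith)))]
    push_cast
    rfl
  have hyy : y * (z / x) + w * w = b := by
    rw [hww, div_mul_div_comm, hxx, Complex.star_def, Complex.conj_mul']
    ring
  have h := (kIncoherent_two_single_add_single i j x y).add
    (kIncoherent_two_single_add_single i j 0 w)
  simp only [zero_mul, mul_zero, star_zero, single_zero, zero_add, add_zero] at h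
  rwa [hxs, hys, hws, hxx, mul_div_cancel₀ z hx, div_mul_cancel₀ _ hx,
    add_assoc _ (single j j _), ← single_add, hyy] at h

lemma kIncoherent_two_single_self (i : Fin n) {c : ℝ} (hc : 0 ≤ c) :
    KIncoherent 2 (single i i (c : ℂ)) := by
  simpa [pairBlock] using kIncoherent_two_pairBlock i i hc le_rfl (z := 0) (by simp)

end TwoSparse

lemma sum_sum_erase_swap {ι α : Type*} [Fintype ι] [DecidableEq ι] [AddCommMonoid α]
    (f : ι → ι → α) : ∑ i, ∑ j ∈ univ.erase i, f j i = ∑ i, ∑ j ∈ univ.erase i, f i j :=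
  Finset.sum_comm' fun _ _ ↦ by simp [ne_comm]

section Weights

variable {n : ℕ} {M : Matrix (Fin n) (Fin n) ℂ}

lemma sum_pairBlock_half (hM : M.IsHermitian) (d : Fin n → Fin n → ℝ) :
    ∑ i, ∑ j ∈ univ.erase i, pairBlock i j (d i j / 2) (M i j / 2) (d j i / 2) =
      ∑ i, ∑ j ∈ univ.erase i, (single i i (d i j : ℂ) + single i j (M i j)) := by
  set f : Fin n → Fin n → Matrix (Fin n) (Fin n) ℂ :=
    fun i j ↦ single i i ((d i j / 2 : ℝ) : ℂ) + single i j (M i j / 2)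
  have hblock (i j : Fin n) :
      pairBlock i j (d i j / 2) (M i j / 2) (d j i / 2) = f i j + f j i := by
    rw [pairBlock, star_div₀, hM.apply, star_ofNat]
    simp only [f]
    abel
  have hhalf (i j : Fin n) : f i j + f i j = single i i (d i j : ℂ) + single i j (M i j) := by
    rw [add_add_add_comm, ← single_add, ← single_add, ← Complex.ofReal_add, add_halves,
      add_halves]
  simp only [hblock, Finset.sum_add_distrib, sum_sum_erase_swap (fun i j ↦ f j i), ← hhalf]

lemma eq_sum_single_add_sum_pairBlock (hM : M.IsHermitian) (d : Fin n → Fin n → ℝ) :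
    M = ∑ i, single i i (((M i i).re - ∑ j ∈ univ.erase i, d i j : ℝ) : ℂ) +
      ∑ i, ∑ j ∈ univ.erase i, pairBlock i j (d i j / 2) (M i j / 2) (d j i / 2) := by
  have hdiag (i : Fin n) : single i i (M i i) =
      single i i (((M i i).re - ∑ j ∈ univ.erase i, d i j : ℝ) : ℂ) +
        ∑ j ∈ univ.erase i, single i i (d i j : ℂ) := by
    have hsum := map_sum (singleAddMonoidHom i i) (fun j ↦ (d i j : ℂ)) (univ.erase i)
    simp only [singleAddMonoidHom_apply] at hsum
    rw [← hsum, ← single_add]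
    congr 1
    push_cast
    rw [sub_add_cancel, Complex.conj_eq_iff_re.1 (hM.apply i i)]
  calc M = ∑ i, ∑ j, single i j (M i j) := matrix_eq_sum_single M
    _ = ∑ i, (single i i (M i i) + ∑ j ∈ univ.erase i, single i j (M i j)) :=
      Finset.sum_congr rfl fun i _ ↦ (Finset.add_sum_erase _ _ (mem_univ i)).symm
    _ = _ := by simp only [hdiag, sum_pairBlock_half hM, Finset.sum_add_distrib, add_assoc]

theorem kIncoherent_two_of_weights (hM : M.IsHermitian) (d : Fin n → Fin n → ℝ)
    (hd : ∀ i j, 0 ≤ d i j) (hprod : ∀ i j, i ≠ j → ‖M i j‖ ^ 2 ≤ d i j * d j i)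
    (hsum : ∀ i, ∑ j ∈ univ.erase i, d i j ≤ (M i i).re) : KIncoherent 2 M := by
  rw [eq_sum_single_add_sum_pairBlock hM d]
  refine (KIncoherent.sum fun i _ ↦ kIncoherent_two_single_self i (sub_nonneg.2 (hsum i))).add
    (KIncoherent.sum fun i _ ↦ KIncoherent.sum fun j hj ↦ ?_)
  refine kIncoherent_two_pairBlock i j (by linarith [hd i j]) (by linarith [hd j i]) ?_
  have := hprod i j (Finset.ne_of_mem_erase hj).symm
  rw [norm_div, Complex.norm_two]
  nlinarith

end Weights

section RowNorm

variable {ι : Type*} [Fintype ι] {E : Matrix ι ι ℂ}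

def rowNorm (E : Matrix ι ι ℂ) (i : ι) : ℝ :=
  √(∑ k, ‖E i k‖ ^ 2)

def rowWeight (E : Matrix ι ι ℂ) (i j : ι) : ℝ :=
  ‖E i j‖ * rowNorm E j / rowNorm E i

lemma rowNorm_sq (E : Matrix ι ι ℂ) (i : ι) : rowNorm E i ^ 2 = ∑ k, ‖E i k‖ ^ 2 :=
  Real.sq_sqrt (Finset.sum_nonneg fun _ _ ↦ sq_nonneg _)

lemma norm_le_rowNorm (E : Matrix ι ι ℂ) (i j : ι) : ‖E i j‖ ≤ rowNorm E i :=
  Real.le_sqrt_of_sq_le (Finset.single_le_sum (fun k _ ↦ sq_nonneg ‖E i k‖) (mem_univ j))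

lemma rowNorm_le_one (hE : ∑ i, rowNorm E i ^ 2 ≤ 1) (i : ι) : rowNorm E i ≤ 1 :=
  (sq_le_one_iff₀ (Real.sqrt_nonneg _)).1
    ((Finset.single_le_sum (fun j _ ↦ sq_nonneg (rowNorm E j)) (mem_univ i)).trans hE)

lemma rowWeight_nonneg (E : Matrix ι ι ℂ) (i j : ι) : 0 ≤ rowWeight E i j :=
  div_nonneg (mul_nonneg (norm_nonneg _) (Real.sqrt_nonneg _)) (Real.sqrt_nonneg _)

lemma sq_norm_le_rowWeight_mul (hE : E.IsHermitian) (i j : ι) :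
    ‖E i j‖ ^ 2 ≤ rowWeight E i j * rowWeight E j i := by
  have hji : ‖E j i‖ = ‖E i j‖ := by rw [← hE.apply i j, norm_star]
  rcases eq_or_ne (E i j) 0 with h | h
  · simp [rowWeight, h]
  have hi := (norm_pos_iff.2 h).trans_le (norm_le_rowNorm E i j)
  have hj := (norm_pos_iff.2 h).trans_le (hji ▸ norm_le_rowNorm E j i)
  rw [rowWeight, rowWeight, hji]
  exact le_of_eq (by field_simp)

lemma sum_norm_mul_rowNorm_le [DecidableEq ι] (hE : ∑ i, rowNorm E i ^ 2 ≤ 1) (i : ι) :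
    ∑ j ∈ univ.erase i, ‖E i j‖ * rowNorm E j ≤ (1 - ‖E i i‖) * rowNorm E i := by
  set a := ‖E i i‖
  set r := ∑ j ∈ univ.erase i, ‖E i j‖ ^ 2
  have hr : 0 ≤ r := Finset.sum_nonneg fun _ _ ↦ sq_nonneg _
  have hsplit : rowNorm E i ^ 2 = a ^ 2 + r := by
    rw [rowNorm_sq]
    exact (Finset.add_sum_erase univ (fun k ↦ ‖E i k‖ ^ 2) (mem_univ i)).symm
  have hrest : ∑ j ∈ univ.erase i, rowNorm E j ^ 2 ≤ 1 - rowNorm E i ^ 2 := by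
    linarith [Finset.add_sum_erase univ (fun j ↦ rowNorm E j ^ 2) (mem_univ i)]
  have hcs : (∑ j ∈ univ.erase i, ‖E i j‖ * rowNorm E j) ^ 2 ≤
      r * ∑ j ∈ univ.erase i, rowNorm E j ^ 2 :=
    Finset.sum_mul_sq_le_sq_mul_sq _ _ _
  have ha : a ≤ 1 := (norm_le_rowNorm E i i).trans (rowNorm_le_one hE i)
  refine (pow_le_pow_iff_left₀ (Finset.sum_nonneg fun j _ ↦ mul_nonneg (norm_nonneg _)
    (Real.sqrt_nonneg _)) (mul_nonneg (by linarith) (Real.sqrt_nonneg _)) two_ne_zero).1 ?_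
  -- `(1 - a)² (a² + r) - r (1 - a² - r) = ((1 - a) a - r)²`
  calc _ ≤ r * (1 - (a ^ 2 + r)) := hcs.trans (by rw [← hsplit]; gcongr)
    _ ≤ (1 - a) ^ 2 * (a ^ 2 + r) := by nlinarith [sq_nonneg ((1 - a) * a - r)]
    _ = ((1 - a) * rowNorm E i) ^ 2 := by rw [mul_pow, hsplit]

lemma sum_rowWeight_le_one_add_re [DecidableEq ι] (hE : ∑ i, rowNorm E i ^ 2 ≤ 1) (i : ι) :
    ∑ j ∈ univ.erase i, rowWeight E i j ≤ 1 + (E i i).re := by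
  have hre : 1 - ‖E i i‖ ≤ 1 + (E i i).re := by
    linarith [neg_abs_le (E i i).re, Complex.abs_re_le_norm (E i i)]
  have h1 : ‖E i i‖ ≤ 1 := (norm_le_rowNorm E i i).trans (rowNorm_le_one hE i)
  simp only [rowWeight, ← Finset.sum_div]
  exact div_le_of_le_mul₀ (Real.sqrt_nonneg _) (by linarith)
    ((sum_norm_mul_rowNorm_le hE i).trans (mul_le_mul_of_nonneg_right hre (Real.sqrt_nonneg _)))

end RowNorm

lemma kIncoherent_two_one_add {n : ℕ} {E : Matrix (Fin n) (Fin n) ℂ} (hE : E.IsHermitian)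
    (hS : ∑ i, rowNorm E i ^ 2 ≤ 1) : KIncoherent 2 (1 + E) := by
  refine kIncoherent_two_of_weights (isHermitian_one.add hE) (rowWeight E) (rowWeight_nonneg E)
    (fun i j hij ↦ ?_) (fun i ↦ ?_)
  · simpa [one_apply_ne hij] using sq_norm_le_rowWeight_mul hE i j
  · simpa using sum_rowWeight_le_one_add_re hS i

lemma sum_rowNorm_sq {n : ℕ} (A : Matrix (Fin n) (Fin n) ℂ) :
    ∑ i, rowNorm A i ^ 2 = frobNorm A ^ 2 := by
  rw [frobNorm, Real.sq_sqrt (Finset.sum_nonneg fun _ _ ↦ Finset.sum_nonneg fun _ _ ↦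
    sq_nonneg _)]
  exact Finset.sum_congr rfl fun i _ ↦ rowNorm_sq A i

theorem twoIncoherent_of_close_to_id_general (n : ℕ)
    (M : Matrix (Fin n) (Fin n) ℂ) (hM : M.IsHermitian)
    (hclose : frobNorm (M - (1 : Matrix (Fin n) (Fin n) ℂ)) ≤ 1) :
    M.PosSemidef ∧ KIncoherent 2 M := by
  have hS : ∑ i, rowNorm (M - 1) i ^ 2 ≤ 1 := by
    rw [sum_rowNorm_sq]
    exact pow_le_one₀ (Real.sqrt_nonneg _) hclose
  have h := kIncoherent_two_one_add (hM.sub isHermitian_one) hS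
  rw [add_sub_cancel] at h
  exact ⟨h.posSemidef, h⟩

/-- If a Hermitian matrix `M` satisfies `‖M - I‖_F ≤ 1`, then `M` is positive semidefinite
and `2`-incoherent. -/
theorem twoIncoherent_of_close_to_id (n : ℕ) (hn : 2 ≤ n)
    (M : Matrix (Fin n) (Fin n) ℂ) (hM : M.IsHermitian)
    (hclose : frobNorm (M - (1 : Matrix (Fin n) (Fin n) ℂ)) ≤ 1) :
    M.PosSemidef ∧ KIncoherent 2 M :=
  twoIncoherent_of_close_to_id_general n M hM hclose
end
end

section
/- Let n, k be positive integers with 1 ≤ k ≤ n and let X ∈ I_k. Then there exist m ≤ n² + 1 vectors v_1, …, v_m ∈ ℂ^n, each having at most k nonzero entries, such that X = ∑_{i=1}^m v_i v_i*. -/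
open Matrix BigOperators Finset ComplexOrder

noncomputable section

/-! A sum of `m` rank-one terms `v vᴴ` with `k`-sparse `v` is `m` times a convex combination of
such terms inside the `n²`-dimensional real space of Hermitian matrices, so by Carathéodory's
theorem it is a nonnegative combination of at most `n² + 1` of them; the coefficients are then
absorbed into the vectors as square roots. -/

open Module

theorem exists_fin_nonneg_smul_sum_eq_sum_of_mem {𝕜 E ι : Type*} [Field 𝕜] [LinearOrder 𝕜]
    [IsStrictOrderedRing 𝕜] [AddCommGroup E] [Module 𝕜 E] [FiniteDimensional 𝕜 E] [Fintype ι]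
    {s : Set E} {a : ι → E} (ha : ∀ i, a i ∈ s) :
    ∃ r ≤ finrank 𝕜 E + 1, ∃ (w : Fin r → 𝕜) (z : Fin r → E),
      (∀ j, 0 ≤ w j) ∧ (∀ j, z j ∈ s) ∧ ∑ i, a i = ∑ j, w j • z j := by
  rcases isEmpty_or_nonempty ι with hι | hι
  · exact ⟨0, Nat.zero_le _, Fin.elim0, Fin.elim0, nofun, nofun, by simp⟩
  have hmem : univ.centerMass (fun _ ↦ (1 : 𝕜)) a ∈ convexHull 𝕜 s :=
    univ.centerMass_mem_convexHull (fun _ _ ↦ zero_le_one) (by simp [Fintype.card_pos])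
      fun i _ ↦ ha i
  obtain ⟨κ, _, z, w, hzs, hz, hw, -, hwz⟩ := eq_pos_convex_span_of_mem_convexHull hmem
  have hcard : (Fintype.card ι : 𝕜) ≠ 0 := Nat.cast_ne_zero.mpr Fintype.card_ne_zero
  let e := (Fintype.equivFin κ).symm
  refine ⟨Fintype.card κ, hz.card_le_finrank_succ.trans (by gcongr; exact Submodule.finrank_le _),
    fun j ↦ Fintype.card ι * w (e j), z ∘ e, fun j ↦ by have := hw (e j); positivity,
    fun j ↦ hzs (Set.mem_range_self _), ?_⟩
  calc ∑ i, a i = (Fintype.card ι : 𝕜) • univ.centerMass (fun _ ↦ (1 : 𝕜)) a := by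
        simp [Finset.centerMass, smul_inv_smul₀ hcard]
    _ = ∑ j, (Fintype.card ι * w (e j)) • z (e j) := by
        rw [← hwz, Finset.smul_sum, ← e.sum_comp]
        simp only [mul_smul]

namespace Matrix

variable {ι : Type*}

/-- Since `A j i = conj (A i j)` for Hermitian `A`, the real numbers `re + im` of the entries
determine the matrix: this map is injective on Hermitian matrices. -/
def hermitianCoords (ι : Type*) : Matrix ι ι ℂ →ₗ[ℝ] Matrix ι ι ℝ :=
  (Complex.reLm + Complex.imLm).mapMatrix

theorem IsHermitian.eq_of_hermitianCoords_eq {A B : Matrix ι ι ℂ} (hA : A.IsHermitian)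
    (hB : B.IsHermitian) (h : hermitianCoords ι A = hermitianCoords ι B) : A = B := by
  ext i j
  have hij := congrFun (congrFun h i) j
  have hji := congrFun (congrFun h j) i
  simp only [hermitianCoords, LinearMap.mapMatrix_apply, map_apply, LinearMap.add_apply,
    Complex.reLm_coe, Complex.imLm_coe] at hij hji
  simp only [← hA.apply i j, ← hB.apply i j, Complex.star_def, Complex.conj_re,
    Complex.conj_im] at hij ⊢
  apply Complex.ext <;> simp only [Complex.conj_re, Complex.conj_im] <;> linarith

theorem vecMulVec_ofReal_sqrt_smul (v : ι → ℂ) {w : ℝ} (hw : 0 ≤ w) :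
    vecMulVec ((√w : ℂ) • v) (star ((√w : ℂ) • v)) = w • vecMulVec v (star v) := by
  rw [star_smul, smul_vecMulVec, vecMulVec_smul, smul_smul, Complex.star_def, Complex.conj_ofReal,
    ← Complex.ofReal_mul, Real.mul_self_sqrt hw, Complex.coe_smul]

end Matrix

theorem suppCard_smul_le {n : ℕ} (c : ℂ) (v : Fin n → ℂ) : suppCard (c • v) ≤ suppCard v :=
  Finset.card_le_card fun i ↦ by simp +contextual

theorem caratheodory_Ik_general (n k : ℕ)
    (X : Matrix (Fin n) (Fin n) ℂ) (hX : X ∈ Ik n k) :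
    ∃ m : ℕ, m ≤ n ^ 2 + 1 ∧ ∃ v : Fin m → (Fin n → ℂ),
      (∀ i, suppCard (v i) ≤ k) ∧ X = ∑ i, vecMulVec (v i) (star (v i)) := by
  obtain ⟨hXpsd, ⟨m, u, hu, rfl⟩, -⟩ := hX
  let sparseRankOne : Set (Matrix (Fin n) (Fin n) ℂ) :=
    {A | ∃ v, suppCard v ≤ k ∧ A = vecMulVec v (star v)}
  obtain ⟨r, hr, w, z, hw, hz, hsum⟩ :=
    exists_fin_nonneg_smul_sum_eq_sum_of_mem (𝕜 := ℝ)
      (s := hermitianCoords (Fin n) '' sparseRankOne) fun i ↦ ⟨_, ⟨u i, hu i, rfl⟩, rfl⟩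
  choose A hA hAz using hz
  choose v hv hAv using hA
  refine ⟨r, by simpa [finrank_matrix, sq] using hr, fun j ↦ (√(w j) : ℂ) • v j,
    fun j ↦ (suppCard_smul_le _ _).trans (hv j), ?_⟩
  refine hXpsd.isHermitian.eq_of_hermitianCoords_eq
    (posSemidef_sum _ fun j _ ↦ posSemidef_vecMulVec_self_star _).isHermitian ?_
  simpa only [map_sum, vecMulVec_ofReal_sqrt_smul _ (hw _), map_smul, ← hAz, hAv] using hsum

/-- Carathéodory-type bound: every `X ∈ I_k` admits a `k`-incoherent decomposition with at
most `n² + 1` rank-one terms. -/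
theorem caratheodory_Ik (n k : ℕ) (hn : 0 < n) (hk : 1 ≤ k) (hkn : k ≤ n)
    (X : Matrix (Fin n) (Fin n) ℂ) (hX : X ∈ Ik n k) :
    ∃ m : ℕ, m ≤ n ^ 2 + 1 ∧ ∃ v : Fin m → (Fin n → ℂ),
      (∀ i, suppCard (v i) ≤ k) ∧ X = ∑ i, vecMulVec (v i) (star (v i)) :=
  caratheodory_Ik_general n k X hX
end
end
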